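/- Let ξ > 0, let M ≥ 1 be an integer, and let E satisfy 0 ≤ 2E ≤ (1+ξ)/(2+3ξ). Then the minimum value of f_{M,ξ,ξ}(p) over all vectors p = (p_{m,n})_{m,n=0}^{M} satisfying p_{m,n} ≥ 0 for all m, n, ∑_{m,n=0}^{M} p_{m,n} = 1, and ∑_{m,n=0}^{M} (m+n) p_{m,n} ≤ 2E, equals (1/(1+ξ)^2) [ 1 − 4(ξ/(1+ξ))E + 6(ξ/(1+ξ))^2 E^2 ]. In particular, this value is independent of M. -/
import Mathlib


open Finset

/-- `T_ξ^{mm'} = ∑_{k=0}^{min(m,m')} C(m,k) C(m',k) ξ^{2k}/(1+ξ)^{m+m'}`. -/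
noncomputable def Tbi (ξ : ℝ) (m m' : ℕ) : ℝ :=
  ∑ k ∈ Finset.range (min m m' + 1),
    (m.choose k : ℝ) * (m'.choose k : ℝ) * ξ ^ (2 * k) / (1 + ξ) ^ (m + m')

/-- The objective function `f_{M,ξ,ξ'}` of the bidirectional teleportation optimization. -/
noncomputable def fBi (M : ℕ) (ξ ξ' : ℝ) (p : Fin (M + 1) → Fin (M + 1) → ℝ) : ℝ :=
  (1 / ((1 + ξ) * (1 + ξ'))) *
    ∑ m : Fin (M + 1), ∑ n : Fin (M + 1), ∑ m' : Fin (M + 1), ∑ n' : Fin (M + 1),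
      p m n * p m' n' * Tbi ξ (m : ℕ) (m' : ℕ) * Tbi ξ' (n : ℕ) (n' : ℕ)

/-- Feasibility: `p_{m,n} ≥ 0`, `∑ p_{m,n} = 1`, `∑ (m+n) p_{m,n} ≤ 2E`. -/
def FeasibleBi (M : ℕ) (E : ℝ) (p : Fin (M + 1) → Fin (M + 1) → ℝ) : Prop :=
  (∀ m n, 0 ≤ p m n) ∧ (∑ m : Fin (M + 1), ∑ n : Fin (M + 1), p m n = 1) ∧
    (∑ m : Fin (M + 1), ∑ n : Fin (M + 1), (((m : ℕ) : ℝ) + ((n : ℕ) : ℝ)) * p m n ≤ 2 * E)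

/-! ### Auxiliary lemmas -/

lemma aux_geo (c : ℝ) (hc0 : 0 ≤ c) (hc1 : c ≤ 1) :
    ∀ j : ℕ, (j:ℝ)*(1-c)*c^j ≤ c*(1-c^j) := by
  intro j
  induction j with
  | zero => simp
  | succ j ih =>
    have hpow : (0:ℝ) ≤ c^j := pow_nonneg hc0 j
    have hx1 : c^j ≤ 1 := pow_le_one₀ hc0 hc1
    have := mul_le_mul_of_nonneg_left ih hc0
    rw [pow_succ]
    push_cast
    nlinarith [mul_nonneg (by linarith : (0:ℝ) ≤ 1-c)
      (mul_nonneg hc0 (by linarith : (0:ℝ) ≤ 1 - c^j))]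

lemma aux_key (c α β lam : ℝ) (hc0 : 0 ≤ c) (hc1 : c ≤ 1) (hβ : 0 ≤ β)
    (hlam : lam = α*(1-c) - β*c) (hβlam : β*c ≤ lam) :
    ∀ j : ℕ, α - lam*j ≤ c^j*(α + β*j) := by
  intro j
  induction j with
  | zero => simp
  | succ j ih =>
    have hpow : (0:ℝ) ≤ c^j := pow_nonneg hc0 j
    have hpw1 : c^j ≤ 1 := pow_le_one₀ hc0 hc1
    have hgeo := aux_geo c hc0 hc1 j
    have h1 : β*((j:ℝ)*(1-c)*c^j) ≤ β*(c*(1-c^j)) := mul_le_mul_of_nonneg_left hgeo hβ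
    have h2 : β*(c*(1-c^j)) ≤ lam*(1-c^j) := by
      have h3 : (0:ℝ) ≤ 1 - c^j := by linarith
      nlinarith
    have hstep : c^(j+1)*(α + β*(j+1)) = c^j*(α+β*j) - (c^j*lam + β*((j:ℝ)*(1-c)*c^j)) := by
      rw [pow_succ]
      push_cast
      rw [hlam]; ring
    push_cast at hstep ⊢
    nlinarith

lemma sum_sq_expand {ι κ : Type*} [Fintype ι] [Fintype κ] (q : ι → ℝ) (v : ι → κ → ℝ) :
    ∑ i : ι, ∑ i' : ι, q i * q i' * (∑ j : κ, v i j * v i' j)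
      = ∑ j : κ, (∑ i : ι, q i * v i j)^2 := by
  calc ∑ i : ι, ∑ i' : ι, q i * q i' * (∑ j : κ, v i j * v i' j)
      = ∑ i : ι, ∑ i' : ι, ∑ j : κ, (q i * v i j) * (q i' * v i' j) := by
        refine Finset.sum_congr rfl fun i _ => Finset.sum_congr rfl fun i' _ => ?_
        rw [Finset.mul_sum]
        exact Finset.sum_congr rfl fun j _ => by ring
    _ = ∑ j : κ, ∑ i : ι, ∑ i' : ι, (q i * v i j) * (q i' * v i' j) := by
        calc ∑ i : ι, ∑ i' : ι, ∑ j : κ, (q i * v i j) * (q i' * v i' j)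
            = ∑ i : ι, ∑ j : κ, ∑ i' : ι, (q i * v i j) * (q i' * v i' j) :=
              Finset.sum_congr rfl fun i _ => Finset.sum_comm
          _ = ∑ j : κ, ∑ i : ι, ∑ i' : ι, (q i * v i j) * (q i' * v i' j) :=
              Finset.sum_comm
    _ = ∑ j : κ, (∑ i : ι, q i * v i j)^2 := by
        refine Finset.sum_congr rfl fun j _ => ?_
        rw [sq]
        exact (Finset.sum_mul_sum univ univ (fun i => q i * v i j)
          (fun i' => q i' * v i' j)).symm

/-- The "single-mode teleportation amplitude" vector. -/
noncomputable def uaux (ξ : ℝ) (m k : ℕ) : ℝ := (m.choose k : ℝ) * ξ^k / (1+ξ)^m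

lemma Tbi_eq (ξ : ℝ) {M m m' : ℕ} (hm : m ≤ M) (hm' : m' ≤ M) :
    Tbi ξ m m' = ∑ k ∈ Finset.range (M+1), uaux ξ m k * uaux ξ m' k := by
  rw [Tbi]
  rw [show ∑ k ∈ Finset.range (min m m' + 1),
        (m.choose k : ℝ) * (m'.choose k : ℝ) * ξ ^ (2*k) / (1+ξ)^(m+m')
      = ∑ k ∈ Finset.range (min m m' + 1), uaux ξ m k * uaux ξ m' k from
    Finset.sum_congr rfl fun k _ => by
      rw [uaux, uaux, two_mul, pow_add, pow_add, div_mul_div_comm]; ring]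
  refine Finset.sum_subset (Finset.range_subset_range.2 (by omega)) fun k _ hk => ?_
  simp only [Finset.mem_range, not_lt] at hk
  have : (m.choose k : ℝ) = 0 ∨ (m'.choose k : ℝ) = 0 := by
    rcases Nat.le_total m m' with h|h
    · left; norm_cast; exact Nat.choose_eq_zero_of_lt (by omega)
    · right; norm_cast; exact Nat.choose_eq_zero_of_lt (by omega)
  rcases this with h|h <;> simp [uaux, h]

lemma mul_mul_sum_sum {κ : Type*} [Fintype κ] (a b : ℝ) (f1 f2 g1 g2 : κ → ℝ) :
    a * b * (∑ k : κ, f1 k * f2 k) * (∑ l : κ, g1 l * g2 l)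
      = a * b * ∑ k : κ, ∑ l : κ, (f1 k * g1 l) * (f2 k * g2 l) := by
  calc a * b * (∑ k : κ, f1 k * f2 k) * (∑ l : κ, g1 l * g2 l)
      = a * b * ∑ k : κ, ∑ l : κ, (f1 k * f2 k) * (g1 l * g2 l) := by
        rw [mul_assoc, Finset.sum_mul_sum univ univ (fun k => f1 k * f2 k)
          (fun l => g1 l * g2 l)]
    _ = a * b * ∑ k : κ, ∑ l : κ, (f1 k * g1 l) * (f2 k * g2 l) := by
        congr 1
        exact Finset.sum_congr rfl fun k _ => Finset.sum_congr rfl fun l _ => by ring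

set_option maxHeartbeats 1000000 in
/-- `fBi` as a sum of squares. -/
lemma fBi_eq (M : ℕ) (ξ : ℝ) (p : Fin (M + 1) → Fin (M + 1) → ℝ) :
    fBi M ξ ξ p = (1 / ((1 + ξ) * (1 + ξ))) *
      ∑ j : Fin (M+1) × Fin (M+1),
        (∑ i : Fin (M+1) × Fin (M+1),
          p i.1 i.2 * (uaux ξ i.1 j.1 * uaux ξ i.2 j.2))^2 := by
  rw [fBi]
  congr 1
  calc ∑ m : Fin (M+1), ∑ n : Fin (M+1), ∑ m' : Fin (M+1), ∑ n' : Fin (M+1),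
        p m n * p m' n' * Tbi ξ (m : ℕ) (m' : ℕ) * Tbi ξ (n : ℕ) (n' : ℕ)
      = ∑ i : Fin (M+1) × Fin (M+1), ∑ i' : Fin (M+1) × Fin (M+1),
          p i.1 i.2 * p i'.1 i'.2 *
            (∑ j : Fin (M+1) × Fin (M+1),
              (uaux ξ i.1 j.1 * uaux ξ i.2 j.2) * (uaux ξ i'.1 j.1 * uaux ξ i'.2 j.2)) := ?_
    _ = ∑ j : Fin (M+1) × Fin (M+1),
          (∑ i : Fin (M+1) × Fin (M+1),
            p i.1 i.2 * (uaux ξ i.1 j.1 * uaux ξ i.2 j.2))^2 :=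
        by apply sum_sq_expand
  simp only [Fintype.sum_prod_type]
  refine Finset.sum_congr rfl fun m _ => Finset.sum_congr rfl fun n _ =>
    Finset.sum_congr rfl fun m' _ => Finset.sum_congr rfl fun n' _ => ?_
  have hm : (m : ℕ) ≤ M := Nat.lt_succ_iff.1 m.isLt
  have hn : (n : ℕ) ≤ M := Nat.lt_succ_iff.1 n.isLt
  have hm' : (m' : ℕ) ≤ M := Nat.lt_succ_iff.1 m'.isLt
  have hn' : (n' : ℕ) ≤ M := Nat.lt_succ_iff.1 n'.isLt
  rw [Tbi_eq ξ hm hm', Tbi_eq ξ hn hn',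
    ← Fin.sum_univ_eq_sum_range (fun k => uaux ξ m k * uaux ξ m' k) (M+1),
    ← Fin.sum_univ_eq_sum_range (fun l => uaux ξ n l * uaux ξ n' l) (M+1)]
  exact mul_mul_sum_sum (p m n) (p m' n') (fun k : Fin (M+1) => uaux ξ m k)
    (fun k : Fin (M+1) => uaux ξ m' k) (fun l : Fin (M+1) => uaux ξ n l)
    (fun l : Fin (M+1) => uaux ξ n' l)


/-! ### The optimal distribution -/

noncomputable def pOpt (K : ℕ) (E : ℝ) : Fin (K+2) → Fin (K+2) → ℝ := fun m n =>
  if m = 0 ∧ n = 0 then 1 - 2*E else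
    if (m = 0 ∧ n = 1) ∨ (m = 1 ∧ n = 0) then E else 0

section pOpt
variable {K : ℕ} {E : ℝ}

lemma fin_one_ne_zero : (1 : Fin (K+2)) ≠ 0 := by
  intro h
  have := congrArg Fin.val h
  simp at this

lemma pOpt_00 : pOpt K E 0 0 = 1 - 2*E := by simp [pOpt]

lemma pOpt_01 : pOpt K E 0 1 = E := by simp [pOpt, fin_one_ne_zero]

lemma pOpt_10 : pOpt K E 1 0 = E := by simp [pOpt, fin_one_ne_zero]

lemma pOpt_zero (i : Fin (K+2) × Fin (K+2)) (h1 : i ≠ (0,0)) (h2 : i ≠ (0,1))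
    (h3 : i ≠ (1,0)) : pOpt K E i.1 i.2 = 0 := by
  rw [pOpt]
  split_ifs with hc1 hc2
  · exact absurd (Prod.ext hc1.1 hc1.2) h1
  · rcases hc2 with h | h
    · exact absurd (Prod.ext h.1 h.2) h2
    · exact absurd (Prod.ext h.1 h.2) h3
  · rfl

lemma pOpt_notmem1 : ((0,0) : Fin (K+2) × Fin (K+2)) ∉
    ({(0,1),(1,0)} : Finset (Fin (K+2) × Fin (K+2))) := by
  simp [Prod.ext_iff, fin_one_ne_zero, (fin_one_ne_zero (K := K)).symm]

lemma pOpt_notmem2 : ((0,1) : Fin (K+2) × Fin (K+2)) ∉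
    ({(1,0)} : Finset (Fin (K+2) × Fin (K+2))) := by
  simp [Prod.ext_iff, fin_one_ne_zero, (fin_one_ne_zero (K := K)).symm]

lemma pOpt_mul_sum (g : Fin (K+2) × Fin (K+2) → ℝ) :
    ∑ i : Fin (K+2) × Fin (K+2), pOpt K E i.1 i.2 * g i
      = (1-2*E) * g (0,0) + E * g (0,1) + E * g (1,0) := by
  rw [← Finset.sum_subset
    (Finset.subset_univ ({(0,0),(0,1),(1,0)} : Finset (Fin (K+2) × Fin (K+2))))
    (fun i _ hi => by
      simp only [Finset.mem_insert, Finset.mem_singleton] at hi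
      push_neg at hi
      rw [pOpt_zero i hi.1 hi.2.1 hi.2.2, zero_mul])]
  rw [Finset.sum_insert (by
      simp only [Finset.mem_insert, Finset.mem_singleton]
      push_neg
      exact ⟨fun h => absurd (congrArg Prod.snd h) fin_one_ne_zero.symm,
        fun h => absurd (congrArg Prod.fst h) fin_one_ne_zero.symm⟩),
    Finset.sum_insert (by
      simp only [Finset.mem_singleton]
      exact fun h => absurd (congrArg Prod.fst h) fin_one_ne_zero.symm),
    Finset.sum_singleton]
  rw [pOpt_00, pOpt_01, pOpt_10]; ring

end pOpt

set_option maxHeartbeats 1000000 in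
theorem bidirectional_optimal_value (ξ E : ℝ) (M : ℕ) (hξ : 0 < ξ)
    (hM : 1 ≤ M) (hE0 : 0 ≤ 2 * E) (hE : 2 * E ≤ (1 + ξ) / (2 + 3 * ξ)) :
    IsLeast {y : ℝ | ∃ p : Fin (M + 1) → Fin (M + 1) → ℝ, FeasibleBi M E p ∧ fBi M ξ ξ p = y}
      ((1 / (1 + ξ) ^ 2) *
        (1 - 4 * (ξ / (1 + ξ)) * E + 6 * (ξ / (1 + ξ)) ^ 2 * E ^ 2)) := by
  obtain ⟨M, rfl⟩ : ∃ K, M = K + 1 := ⟨M - 1, by omega⟩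
  have h1ξ : (0:ℝ) < 1 + ξ := by linarith
  have h1ξ' : (1:ℝ) + ξ ≠ 0 := ne_of_gt h1ξ
  have hEnn : 0 ≤ E := by linarith
  have hE' : 2*E*(2+3*ξ) ≤ 1 + ξ := by
    have h2 : (0:ℝ) < 2+3*ξ := by linarith
    calc 2*E*(2+3*ξ) ≤ ((1+ξ)/(2+3*ξ))*(2+3*ξ) :=
          mul_le_mul_of_nonneg_right hE (le_of_lt h2)
      _ = 1 + ξ := div_mul_cancel₀ _ (ne_of_gt h2)
  have hE1 : 2*E ≤ 1 := by nlinarith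
  have h01 : (0 : Fin (M+2)) ≠ 1 := fin_one_ne_zero.symm
  -- abbreviations
  set c : ℝ := 1/(1+ξ) with hc
  have hc0 : (0:ℝ) ≤ c := by positivity
  have hc1 : c ≤ 1 := by rw [hc, div_le_one h1ξ]; linarith
  set Astar : ℝ := 1 - 2*(ξ/(1+ξ))*E with hAstar
  set Bstar : ℝ := 2*E*c with hBstar
  set lam : ℝ := (2*Astar)*(1-c) - (ξ^2*Bstar)*c with hlam
  have hβ : (0:ℝ) ≤ ξ^2*Bstar := by rw [hBstar]; positivity
  have h4 : 4*ξ*E ≤ 1+ξ := by nlinarith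
  have h4' : 4*(ξ/(1+ξ))*E ≤ 1 := by
    rw [show 4*(ξ/(1+ξ))*E = (4*ξ*E)/(1+ξ) by ring, div_le_one h1ξ]
    linarith
  have hηnn : (0:ℝ) ≤ ξ/(1+ξ) := by positivity
  have hβlam : (ξ^2*Bstar)*c ≤ lam := by
    have hkeyid : lam - (ξ^2*Bstar)*c = 2*(ξ/(1+ξ))*(1 - 4*(ξ/(1+ξ))*E) := by
      rw [hlam, hBstar, hAstar, hc]
      field_simp
      ring
    have h5 : (0:ℝ) ≤ 2*(ξ/(1+ξ))*(1 - 4*(ξ/(1+ξ))*E) :=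
      mul_nonneg (by linarith) (by linarith)
    linarith
  have hlam0 : (0:ℝ) ≤ lam := le_trans (mul_nonneg hβ hc0) hβlam
  -- uaux evaluations
  have hu00 : uaux ξ 0 0 = 1 := by simp [uaux]
  have hu01 : uaux ξ 0 1 = 0 := by simp [uaux]
  have hu10 : uaux ξ 1 0 = 1/(1+ξ) := by simp [uaux]
  have hu11 : uaux ξ 1 1 = ξ/(1+ξ) := by simp [uaux]
  have hu0big : ∀ k : ℕ, 1 ≤ k → uaux ξ 0 k = 0 := by
    intro k hk
    rw [uaux, Nat.choose_eq_zero_of_lt (by omega)]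
    simp
  have hu1big : ∀ k : ℕ, 2 ≤ k → uaux ξ 1 k = 0 := by
    intro k hk
    rw [uaux, Nat.choose_eq_zero_of_lt (by omega)]
    simp
  have hval2 : ∀ k : Fin (M+2), k ≠ 0 → k ≠ 1 → 2 ≤ (k:ℕ) := by
    intro k hk0 hk1
    by_contra h
    push_neg at h
    interval_cases hkv : (k:ℕ)
    · exact hk0 (Fin.ext (by simp [hkv]))
    · exact hk1 (Fin.ext (by simp [hkv]))
  constructor
  · -- membership: the optimal distribution pOpt
    refine ⟨pOpt M E, ⟨?_, ?_, ?_⟩, ?_⟩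
    · intro m n
      rw [pOpt]
      split_ifs with hc1' hc2'
      · linarith
      · linarith
      · exact le_refl 0
    · rw [← Fintype.sum_prod_type']
      have h := pOpt_mul_sum (K := M) (E := E) (fun _ => (1:ℝ))
      simp only [mul_one] at h
      rw [h]
      ring
    · rw [← Fintype.sum_prod_type']
      have h := pOpt_mul_sum (K := M) (E := E)
        (fun i => (((i.1:ℕ):ℝ) + ((i.2:ℕ):ℝ)))
      rw [show ∑ i : Fin (M+2) × Fin (M+2), (((i.1:ℕ):ℝ)+((i.2:ℕ):ℝ)) * pOpt M E i.1 i.2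
          = ∑ i : Fin (M+2) × Fin (M+2), pOpt M E i.1 i.2 * ((((i.1:ℕ):ℝ)+((i.2:ℕ):ℝ)))
          from Finset.sum_congr rfl fun i _ => mul_comm _ _, h]
      simp only [Fin.val_zero, Fin.val_one]
      norm_num
      linarith
    · rw [fBi_eq]
      have hWj : ∀ j : Fin (M+2) × Fin (M+2),
          (∑ i : Fin (M+2) × Fin (M+2), pOpt M E i.1 i.2 * (uaux ξ i.1 j.1 * uaux ξ i.2 j.2))
          = (1-2*E)*(uaux ξ 0 j.1 * uaux ξ 0 j.2) + E*(uaux ξ 0 j.1 * uaux ξ 1 j.2)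
            + E*(uaux ξ 1 j.1 * uaux ξ 0 j.2) := by
        intro j
        have h := pOpt_mul_sum (K := M) (E := E)
          (fun i => uaux ξ i.1 j.1 * uaux ξ i.2 j.2)
        simpa [Fin.val_zero, Fin.val_one] using h
      simp only [hWj]
      have hred : ∑ j : Fin (M+2) × Fin (M+2),
          ((1-2*E)*(uaux ξ 0 j.1 * uaux ξ 0 j.2) + E*(uaux ξ 0 j.1 * uaux ξ 1 j.2)
            + E*(uaux ξ 1 j.1 * uaux ξ 0 j.2))^2
          = ∑ j ∈ ({(0,0),(0,1),(1,0),(1,1)} : Finset (Fin (M+2) × Fin (M+2))),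
            ((1-2*E)*(uaux ξ 0 j.1 * uaux ξ 0 j.2) + E*(uaux ξ 0 j.1 * uaux ξ 1 j.2)
              + E*(uaux ξ 1 j.1 * uaux ξ 0 j.2))^2 := by
        refine (Finset.sum_subset (Finset.subset_univ _) fun j _ hj => ?_).symm
        simp only [Finset.mem_insert, Finset.mem_singleton, Prod.ext_iff] at hj
        push_neg at hj
        have hcase : 2 ≤ (j.1:ℕ) ∨ 2 ≤ (j.2:ℕ) := by
          by_contra hcc
          push_neg at hcc
          have ha : j.1 = 0 ∨ j.1 = 1 := by
            by_contra h
            push_neg at h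
            have := hval2 j.1 h.1 h.2
            omega
          have hb : j.2 = 0 ∨ j.2 = 1 := by
            by_contra h
            push_neg at h
            have := hval2 j.2 h.1 h.2
            omega
          rcases ha with ha | ha <;> rcases hb with hb | hb
          · exact (hj.1 ha) hb
          · exact (hj.2.1 ha) hb
          · exact (hj.2.2.1 ha) hb
          · exact (hj.2.2.2 ha) hb
        rcases hcase with hcs | hcs
        · rw [hu0big (j.1:ℕ) (by omega), hu1big (j.1:ℕ) hcs]
          ring
        · rw [hu0big (j.2:ℕ) (by omega), hu1big (j.2:ℕ) hcs]
          ring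
      rw [hred]
      rw [Finset.sum_insert (by
          simp only [Finset.mem_insert, Finset.mem_singleton, Prod.ext_iff]
          push_neg
          refine ⟨fun _ => h01, fun h => absurd h h01, fun h => absurd h h01⟩),
        Finset.sum_insert (by
          simp only [Finset.mem_insert, Finset.mem_singleton, Prod.ext_iff]
          push_neg
          exact ⟨fun h => absurd h h01, fun h => absurd h h01⟩),
        Finset.sum_insert (by
          simp [Prod.ext_iff, h01, (Ne.symm h01)]),
        Finset.sum_singleton]
      simp only [Fin.val_zero, Fin.val_one, hu00, hu01, hu10, hu11]
      field_simp
      ring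
  · -- lower bound
    rintro y ⟨p, ⟨hpos, hsum1, hen⟩, rfl⟩
    rw [fBi_eq]
    have hsum1' : ∑ i : Fin (M+2) × Fin (M+2), p i.1 i.2 = 1 :=
      (Fintype.sum_prod_type' (f := fun a b : Fin (M+2) => p a b)).trans hsum1
    have hen' : ∑ i : Fin (M+2) × Fin (M+2), (((i.1:ℕ):ℝ) + ((i.2:ℕ):ℝ)) * p i.1 i.2 ≤ 2*E :=
      le_of_eq_of_le (Fintype.sum_prod_type'
        (f := fun a b : Fin (M+2) => (((a:ℕ):ℝ) + ((b:ℕ):ℝ)) * p a b)) hen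
    set W : Fin (M+2) × Fin (M+2) → ℝ := fun j =>
      ∑ i : Fin (M+2) × Fin (M+2), p i.1 i.2 * (uaux ξ i.1 j.1 * uaux ξ i.2 j.2) with hW
    set A : ℝ := ∑ i : Fin (M+2) × Fin (M+2), p i.1 i.2 * c^((i.1:ℕ)+(i.2:ℕ)) with hA
    set B1 : ℝ := ∑ i : Fin (M+2) × Fin (M+2),
      p i.1 i.2 * (((i.1:ℕ):ℝ) * c^((i.1:ℕ)+(i.2:ℕ))) with hB1
    set B2 : ℝ := ∑ i : Fin (M+2) × Fin (M+2),
      p i.1 i.2 * (((i.2:ℕ):ℝ) * c^((i.1:ℕ)+(i.2:ℕ))) with hB2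
    clear_value W A B1 B2
    have huu00 : ∀ m n : ℕ, uaux ξ m 0 * uaux ξ n 0 = c^(m+n) := by
      intro m n
      rw [uaux, uaux, hc, div_pow, pow_add]
      simp only [Nat.choose_zero_right, Nat.cast_one, pow_zero, one_mul, one_div, mul_one,
        one_pow]
      rw [pow_add, mul_inv]
    have hj0 : W (0,0) = A := by
      rw [hW, hA]
      refine Finset.sum_congr rfl fun i _ => ?_
      simp only [Fin.val_zero]
      rw [huu00]
    have hj1 : W (1,0) = ξ * B1 := by
      rw [hW, hB1, Finset.mul_sum]
      refine Finset.sum_congr rfl fun i _ => ?_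
      simp only [Fin.val_zero, Fin.val_one]
      rw [uaux, uaux, Nat.choose_one_right, Nat.choose_zero_right, hc, div_pow, pow_add]
      field_simp
      ring
    have hj2 : W (0,1) = ξ * B2 := by
      rw [hW, hB2, Finset.mul_sum]
      refine Finset.sum_congr rfl fun i _ => ?_
      simp only [Fin.val_zero, Fin.val_one]
      rw [uaux, uaux, Nat.choose_one_right, Nat.choose_zero_right, hc, div_pow, pow_add]
      field_simp
      ring
    have hWle : (W (0,0))^2 + (W (1,0))^2 + (W (0,1))^2 ≤ ∑ j, (W j)^2 := by
      have hsub := Finset.sum_le_sum_of_subset_of_nonneg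
        (Finset.subset_univ ({(0,0),(1,0),(0,1)} : Finset (Fin (M+2) × Fin (M+2))))
        (fun j _ _ => sq_nonneg (W j))
      rw [Finset.sum_insert (by
          simp only [Finset.mem_insert, Finset.mem_singleton]
          push_neg
          exact ⟨fun h => absurd (congrArg Prod.fst h) h01,
            fun h => absurd (congrArg Prod.snd h) h01⟩),
        Finset.sum_insert (by
          simp only [Finset.mem_singleton]
          exact fun h => absurd (congrArg Prod.fst h) h01.symm),
        Finset.sum_singleton] at hsub
      linarith
    have hkey := aux_key c (2*Astar) (ξ^2*Bstar) lam hc0 hc1 hβ hlam hβlam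
    have hlinlow : (2*Astar) - lam*(2*E) ≤ (2*Astar)*A + (ξ^2*Bstar)*B1 + (ξ^2*Bstar)*B2 := by
      have hterm : ∀ i ∈ (Finset.univ : Finset (Fin (M+2) × Fin (M+2))),
          p i.1 i.2 * ((2*Astar) - lam*(((i.1:ℕ):ℝ)+((i.2:ℕ):ℝ)))
            ≤ p i.1 i.2 * (c^((i.1:ℕ)+(i.2:ℕ))*((2*Astar) + (ξ^2*Bstar)*(((i.1:ℕ):ℝ)+((i.2:ℕ):ℝ)))) := by
        intro i _
        have hk := hkey ((i.1:ℕ)+(i.2:ℕ))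
        push_cast at hk
        exact mul_le_mul_of_nonneg_left hk (hpos i.1 i.2)
      have hs := Finset.sum_le_sum hterm
      have hL : ∑ i : Fin (M+2) × Fin (M+2),
          p i.1 i.2 * ((2*Astar) - lam*(((i.1:ℕ):ℝ)+((i.2:ℕ):ℝ)))
          = (2*Astar) * (∑ i : Fin (M+2) × Fin (M+2), p i.1 i.2)
            - lam * (∑ i : Fin (M+2) × Fin (M+2), (((i.1:ℕ):ℝ)+((i.2:ℕ):ℝ)) * p i.1 i.2) := by
        rw [Finset.mul_sum, Finset.mul_sum, ← Finset.sum_sub_distrib]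
        exact Finset.sum_congr rfl fun i _ => by ring
      have hR : ∑ i : Fin (M+2) × Fin (M+2),
          p i.1 i.2 * (c^((i.1:ℕ)+(i.2:ℕ))*((2*Astar) + (ξ^2*Bstar)*(((i.1:ℕ):ℝ)+((i.2:ℕ):ℝ))))
          = (2*Astar)*A + (ξ^2*Bstar)*B1 + (ξ^2*Bstar)*B2 := by
        rw [hA, hB1, hB2, Finset.mul_sum, Finset.mul_sum, Finset.mul_sum,
          ← Finset.sum_add_distrib, ← Finset.sum_add_distrib]
        refine Finset.sum_congr rfl fun i _ => ?_
        push_cast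
        ring
      rw [hsum1'] at hL
      have hmul := mul_le_mul_of_nonneg_left hen' hlam0
      linarith [hs, hL, hR, hmul]
    have e4 : 2*Astar - lam*(2*E) - (Astar^2 + (ξ^2/2)*Bstar^2)
        = 1 - 4*(ξ/(1+ξ))*E + 6*(ξ/(1+ξ))^2*E^2 := by
      rw [hlam, hAstar, hBstar, hc]
      field_simp
      ring
    clear_value c Astar Bstar lam
    have hT : 1 - 4*(ξ/(1+ξ))*E + 6*(ξ/(1+ξ))^2*E^2 ≤ ∑ j, (W j)^2 := by
      have e1 : (W (0,0))^2 + (W (1,0))^2 + (W (0,1))^2 = A^2 + ξ^2*B1^2 + ξ^2*B2^2 := by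
        rw [hj0, hj1, hj2]; ring
      have e2 : A^2 + (ξ^2/2)*(B1+B2)^2 ≤ A^2 + ξ^2*B1^2 + ξ^2*B2^2 := by
        have h6 : (0:ℝ) ≤ ξ^2*(B1-B2)^2 := mul_nonneg (sq_nonneg ξ) (sq_nonneg (B1-B2))
        linarith [h6]
      have e3 : (2*Astar)*A + (ξ^2*Bstar)*(B1+B2) - (Astar^2 + (ξ^2/2)*Bstar^2)
          ≤ A^2 + (ξ^2/2)*(B1+B2)^2 := by
        have h7 : (0:ℝ) ≤ (A - Astar)^2 := sq_nonneg _
        have h8 : (0:ℝ) ≤ ξ^2*(B1+B2-Bstar)^2 :=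
          mul_nonneg (sq_nonneg ξ) (sq_nonneg (B1+B2-Bstar))
        linarith [h7, h8]
      linarith
    rw [show (1:ℝ)/(1+ξ)^2 = 1/((1+ξ)*(1+ξ)) by ring]
    simp only [hW] at hT
    exact mul_le_mul_of_nonneg_left hT (by positivity)
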